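/- arXiv:2105.00860 — 2 statements merged into one kernel-verified Lean document; each statement's English description precedes it below -/
import Mathlib

section
/- Let G ∈ R^{p×p} be symmetric positive definite, partitioned conformably as blocks indexed by a subset S ⊆ {1,…,p} and its complement Sᶜ. For a diagonal penalty matrix Λ = diag(Λ_S, Λ_{Sᶜ}) with positive diagonal entries, as Λ_S → 0 and all diagonal entries of Λ_{Sᶜ} → ∞, the inverse (G + Λ)⁻¹ converges to the block matrix [[(G_{SS})⁻¹, 0], [0, 0]], where G_{SS} is the principal submatrix of G indexed by S. -/
/-!
Write `G + Λ` in blocks with `A = G_SS + Λ_S` and `D = G_ScSc + Λ_Sc`. Since `G_ScSc` is positive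
semidefinite, `v ⬝ D v ≥ (min Λ_Sc) ‖v‖²` with `min Λ_Sc → ∞`, which forces `D⁻¹ → 0` entrywise.
The Schur complement formula expresses `(G + Λ)⁻¹` as a continuous function of `D⁻¹` and of
`(A - G_SSc D⁻¹ G_ScS)⁻¹`; the latter tends to `G_SS⁻¹`, and at `D⁻¹ = 0` the formula reduces to
`fromBlocks G_SS⁻¹ 0 0 0`.
-/

open Matrix Filter Topology

namespace Matrix

theorem inv_fromBlocks_of_isUnit₂₂ {m n α : Type*} [Fintype m] [Fintype n] [DecidableEq m]
    [DecidableEq n] [CommRing α] {A : Matrix m m α} {B : Matrix m n α} {C : Matrix n m α}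
    {D : Matrix n n α} (hD : IsUnit D) (hS : IsUnit (A - B * D⁻¹ * C)) :
    (fromBlocks A B C D)⁻¹ =
      fromBlocks (A - B * D⁻¹ * C)⁻¹ (-((A - B * D⁻¹ * C)⁻¹ * B * D⁻¹))
        (-(D⁻¹ * C * (A - B * D⁻¹ * C)⁻¹))
        (D⁻¹ + D⁻¹ * C * (A - B * D⁻¹ * C)⁻¹ * B * D⁻¹) := by
  let := hD.invertible
  let : Invertible (A - B * ⅟D * C) := by rw [invOf_eq_nonsing_inv]; exact hS.invertible
  let := fromBlocks₂₂Invertible A B C D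
  rw [← invOf_eq_nonsing_inv, invOf_fromBlocks₂₂_eq]
  simp only [invOf_eq_nonsing_inv]

theorem fromBlocks_toBlocks_add_diagonal {m n α : Type*} [DecidableEq m] [DecidableEq n]
    [AddZeroClass α] (M : Matrix (m ⊕ n) (m ⊕ n) α) (d₁ : m → α) (d₂ : n → α) :
    M + diagonal (Sum.elim d₁ d₂) =
      fromBlocks (M.toBlocks₁₁ + diagonal d₁) M.toBlocks₁₂ M.toBlocks₂₁
        (M.toBlocks₂₂ + diagonal d₂) := by
  conv_lhs => rw [← fromBlocks_toBlocks M, ← fromBlocks_diagonal, fromBlocks_add]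
  simp only [add_zero]

theorem mul_self_le_dotProduct_self {n : Type*} [Fintype n] (v : n → ℝ) (i : n) :
    v i * v i ≤ v ⬝ᵥ v :=
  Finset.single_le_sum (fun k _ => mul_self_nonneg (v k)) (Finset.mem_univ i)

def IsCoerciveWith {n : Type*} [Fintype n] (M : Matrix n n ℝ) (c : ℝ) : Prop :=
  ∀ v : n → ℝ, c * (v ⬝ᵥ v) ≤ v ⬝ᵥ M *ᵥ v

namespace IsCoerciveWith

variable {n : Type*} [Fintype n] [DecidableEq n] {M : Matrix n n ℝ} {c : ℝ}

theorem isUnit (hM : M.IsCoerciveWith c) (hc : 0 < c) : IsUnit M := by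
  refine mulVec_injective_iff_isUnit.mp fun v w hvw => sub_eq_zero.mp ?_
  have hker : M *ᵥ (v - w) = 0 := by rw [mulVec_sub, hvw, sub_self]
  have hle : c * ((v - w) ⬝ᵥ (v - w)) ≤ 0 := by simpa [hker] using hM (v - w)
  have hnonneg : 0 ≤ (v - w) ⬝ᵥ (v - w) := Finset.sum_nonneg fun k _ => mul_self_nonneg _
  exact dotProduct_self_eq_zero.mp (le_antisymm (nonpos_of_mul_nonpos_right hle hc) hnonneg)

/-- Tested on `x = M⁻¹ eⱼ`, coercivity reads `c ‖x‖² ≤ xⱼ ≤ ‖x‖`, so `‖x‖ ≤ c⁻¹`. -/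
theorem abs_inv_apply_le (hM : M.IsCoerciveWith c) (hc : 0 < c) (i j : n) :
    |M⁻¹ i j| ≤ c⁻¹ := by
  set x := M⁻¹ *ᵥ Pi.single j 1
  have hx : M *ᵥ x = Pi.single j 1 := by
    rw [mulVec_mulVec, mul_nonsing_inv _ ((isUnit_iff_isUnit_det M).mp (hM.isUnit hc)),
      one_mulVec]
  have hxj : c * (x ⬝ᵥ x) ≤ x j := by simpa [hx] using hM x
  have hnorm : x ⬝ᵥ x ≤ c⁻¹ * c⁻¹ := by
    have hnonneg : 0 ≤ x ⬝ᵥ x := Finset.sum_nonneg fun k _ => mul_self_nonneg (x k)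
    have hsq : (c * (x ⬝ᵥ x)) * (c * (x ⬝ᵥ x)) ≤ x ⬝ᵥ x :=
      (mul_self_le_mul_self (mul_nonneg hc.le hnonneg) hxj).trans
        (mul_self_le_dotProduct_self x j)
    rcases hnonneg.eq_or_lt with hzero | hpos
    · rw [← hzero]; positivity
    · rw [← mul_inv, le_inv_comm₀ hpos (by positivity), inv_eq_one_div, le_div_iff₀ hpos]
      nlinarith
  have hentry : M⁻¹ i j = x i := by simp [x, mulVec_single]
  rw [hentry]
  exact abs_le_of_sq_le_sq (by nlinarith [mul_self_le_dotProduct_self x i]) (by positivity)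

end IsCoerciveWith

theorem PosSemidef.isCoerciveWith_add_diagonal {n : Type*} [Fintype n] [DecidableEq n]
    {P : Matrix n n ℝ} (hP : P.PosSemidef) {d : n → ℝ} {c : ℝ} (hd : ∀ j, c ≤ d j) :
    (P + diagonal d).IsCoerciveWith c := by
  intro v
  have hPv : 0 ≤ v ⬝ᵥ P *ᵥ v := by simpa using hP.dotProduct_mulVec_nonneg v
  have hdiag : c * (v ⬝ᵥ v) ≤ v ⬝ᵥ diagonal d *ᵥ v := by
    simp only [dotProduct, mulVec_diagonal, Finset.mul_sum]
    exact Finset.sum_le_sum fun k _ => by nlinarith [hd k, mul_self_nonneg (v k)]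
  rw [add_mulVec, dotProduct_add]
  linarith

section Limits

variable {X : Type*} {l : Filter X}

theorem tendsto_inv_add_diagonal_atTop {n : Type*} [Fintype n] [DecidableEq n]
    {P : Matrix n n ℝ} (hP : P.PosSemidef) {d : X → n → ℝ}
    (hd : ∀ j, Tendsto (fun x => d x j) l atTop) :
    Tendsto (fun x => (P + diagonal (d x))⁻¹) l (𝓝 0) := by
  refine tendsto_pi_nhds.2 fun i => tendsto_pi_nhds.2 fun j =>
    Metric.tendsto_nhds.2 fun ε hε => ?_
  filter_upwards [eventually_all.2 fun k => (hd k).eventually_ge_atTop (2 / ε)] with x hx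
  rw [Real.dist_eq, zero_apply, sub_zero]
  calc _ ≤ (2 / ε)⁻¹ := (hP.isCoerciveWith_add_diagonal hx).abs_inv_apply_le (by positivity) i j
    _ < ε := by rw [inv_div]; linarith

theorem tendsto_inv_fromBlocks {m n K : Type*} [Fintype m] [Fintype n] [DecidableEq m]
    [DecidableEq n] [Field K] [TopologicalSpace K] [IsTopologicalDivisionRing K] [T1Space K]
    {A : X → Matrix m m K} {A₀ : Matrix m m K} (hA : Tendsto A l (𝓝 A₀)) (hA₀ : IsUnit A₀)
    (B : Matrix m n K) (C : Matrix n m K) {D : X → Matrix n n K}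
    (hD : Tendsto (fun x => (D x)⁻¹) l (𝓝 0)) (hDunit : ∀ᶠ x in l, IsUnit (D x)) :
    Tendsto (fun x => (fromBlocks (A x) B C (D x))⁻¹) l (𝓝 (fromBlocks A₀⁻¹ 0 0 0)) := by
  set S := fun x => A x - B * (D x)⁻¹ * C
  have hS : Tendsto S l (𝓝 A₀) := by
    have hcorr : Continuous fun Q : Matrix n n K => B * Q * C := by fun_prop
    simpa using hA.sub ((hcorr.tendsto 0).comp hD)
  have hdet₀ : A₀.det ≠ 0 := ((isUnit_iff_isUnit_det A₀).mp hA₀).ne_zero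
  have hSinv : Tendsto (fun x => (S x)⁻¹) l (𝓝 A₀⁻¹) := by
    refine (continuousAt_matrix_inv A₀ ?_).tendsto.comp hS
    rw [Ring.inverse_eq_inv']
    exact continuousAt_inv₀ hdet₀
  have hSunit : ∀ᶠ x in l, IsUnit (S x) := by
    have hdet := (continuous_id.matrix_det.tendsto A₀).comp hS
    filter_upwards [hdet.eventually_ne hdet₀] with x hx
    exact (isUnit_iff_isUnit_det _).mpr (Ne.isUnit hx)
  have hformula : Continuous fun PQ : Matrix m m K × Matrix n n K =>
      fromBlocks PQ.1 (-(PQ.1 * B * PQ.2)) (-(PQ.2 * C * PQ.1))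
        (PQ.2 + PQ.2 * C * PQ.1 * B * PQ.2) := by fun_prop
  refine Tendsto.congr' ?_
    (by simpa using (hformula.tendsto (A₀⁻¹, 0)).comp (hSinv.prodMk_nhds hD))
  filter_upwards [hDunit, hSunit] with x hDx hSx
  exact (inv_fromBlocks_of_isUnit₂₂ hDx hSx).symm

end Limits

end Matrix

theorem blockwise_penalty_limit_general {s t : ℕ}
    (G : Matrix (Fin s ⊕ Fin t) (Fin s ⊕ Fin t) ℝ) (hG : G.PosDef)
    (ΛS : ℕ → Fin s → ℝ) (ΛC : ℕ → Fin t → ℝ)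
    (hS : ∀ i, Tendsto (fun n => ΛS n i) atTop (nhds 0))
    (hC : ∀ j, Tendsto (fun n => ΛC n j) atTop atTop) :
    Tendsto (fun n => (G + Matrix.diagonal (Sum.elim (ΛS n) (ΛC n)))⁻¹) atTop
      (nhds (Matrix.fromBlocks (G.toBlocks₁₁)⁻¹ 0 0 0)) := by
  simp only [fromBlocks_toBlocks_add_diagonal]
  have hG₁₁ : Tendsto (fun n => G.toBlocks₁₁ + diagonal (ΛS n)) atTop (𝓝 G.toBlocks₁₁) := by
    simpa using tendsto_const_nhds.add
      ((continuous_id.matrix_diagonal.tendsto 0).comp (tendsto_pi_nhds.2 hS))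
  have hG₂₂ : G.toBlocks₂₂.PosSemidef := hG.posSemidef.submatrix Sum.inr
  refine tendsto_inv_fromBlocks hG₁₁ (hG.submatrix Sum.inl_injective).isUnit _ _
    (tendsto_inv_add_diagonal_atTop hG₂₂ hC) ?_
  filter_upwards [eventually_all.2 fun j => (hC j).eventually_ge_atTop 1] with n hn
  exact (hG₂₂.isCoerciveWith_add_diagonal hn).isUnit one_pos

/-- For a symmetric positive definite matrix `G` partitioned in blocks
over `S ⊕ Sᶜ`, as the diagonal penalties on `S` tend to `0` and those on `Sᶜ`
tend to `∞`, the inverse `(G + Λ)⁻¹` converges to `[[(G_{SS})⁻¹, 0], [0, 0]]`. -/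
theorem blockwise_penalty_limit {s t : ℕ}
    (G : Matrix (Fin s ⊕ Fin t) (Fin s ⊕ Fin t) ℝ) (hG : G.PosDef)
    (ΛS : ℕ → Fin s → ℝ) (ΛC : ℕ → Fin t → ℝ)
    (hposS : ∀ n i, 0 < ΛS n i) (hposC : ∀ n j, 0 < ΛC n j)
    (hS : ∀ i, Tendsto (fun n => ΛS n i) atTop (nhds 0))
    (hC : ∀ j, Tendsto (fun n => ΛC n j) atTop atTop) :
    Tendsto (fun n => (G + Matrix.diagonal (Sum.elim (ΛS n) (ΛC n)))⁻¹) atTop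
      (nhds (Matrix.fromBlocks (G.toBlocks₁₁)⁻¹ 0 0 0)) :=
  blockwise_penalty_limit_general G hG ΛS ΛC hS hC
end

section
/- Let Γ be a symmetric positive definite n×n matrix and Λ̄ a nonzero symmetric positive semidefinite n×n matrix. Then for any vector v in the column space of Λ̄ with Λ̄ v = μ v for some eigenvalue μ > 0, the quadratic form satisfies vᵀ (Γ⁻¹ − (Γ+Λ̄)⁻¹ Γ (Γ+Λ̄)⁻¹) v > 0; i.e. asymptotic variance reduction of the ridge estimator is strict along directions with nonzero asymptotic shrinkage. -/
/-!
With `A = Γ + Λ̄` one has `A Γ⁻¹ A - Γ = 2 Λ̄ + Λ̄ Γ⁻¹ Λ̄`, hence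
`Γ⁻¹ - A⁻¹ Γ A⁻¹ = A⁻¹ (2 Λ̄ + Λ̄ Γ⁻¹ Λ̄) A⁻¹`. At `v` this form equals
`2 wᵀ Λ̄ w + (Λ̄ w)ᵀ Γ⁻¹ (Λ̄ w)` with `w = A⁻¹ v`, which is positive once `Λ̄ w ≠ 0`.
That holds because `vᵀ Λ̄ w = μ vᵀ A⁻¹ v > 0`.
-/

open Matrix

namespace Matrix

variable {n R : Type*} [Fintype n]

theorem IsSymm.dotProduct_mulVec_comm [CommSemiring R] {A : Matrix n n R} (hA : A.IsSymm)
    (u w : n → R) : u ⬝ᵥ (A *ᵥ w) = (A *ᵥ u) ⬝ᵥ w := by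
  rw [dotProduct_mulVec, ← mulVec_transpose, hA.eq]

theorem IsSymm.dotProduct_mul_mul_self_mulVec [CommSemiring R] {A : Matrix n n R}
    (hA : A.IsSymm) (N : Matrix n n R) (v : n → R) :
    v ⬝ᵥ ((A * N * A) *ᵥ v) = (A *ᵥ v) ⬝ᵥ (N *ᵥ (A *ᵥ v)) := by
  rw [← mulVec_mulVec, ← mulVec_mulVec, hA.dotProduct_mulVec_comm]

theorem inv_sub_inv_add_mul_mul_inv_add [DecidableEq n] [CommRing R] (Γ L : Matrix n n R)
    (hΓ : IsUnit Γ.det) (hΓL : IsUnit (Γ + L).det) :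
    Γ⁻¹ - (Γ + L)⁻¹ * Γ * (Γ + L)⁻¹ = (Γ + L)⁻¹ * (2 • L + L * Γ⁻¹ * L) * (Γ + L)⁻¹ := by
  have hΓinv : Γ⁻¹ = (Γ + L)⁻¹ * ((Γ + L) * Γ⁻¹ * (Γ + L)) * (Γ + L)⁻¹ := by
    simp only [Matrix.mul_assoc, mul_nonsing_inv _ hΓL, Matrix.mul_one]
    simp only [← Matrix.mul_assoc, nonsing_inv_mul _ hΓL, Matrix.one_mul]
  have hexpand : (Γ + L) * Γ⁻¹ * (Γ + L) - Γ = 2 • L + L * Γ⁻¹ * L := by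
    simp only [Matrix.add_mul, Matrix.mul_add, mul_nonsing_inv _ hΓ, Matrix.one_mul,
      Matrix.mul_assoc, nonsing_inv_mul _ hΓ, Matrix.mul_one]
    abel
  rw [← hexpand, Matrix.mul_sub, Matrix.sub_mul, ← hΓinv]

variable [Field R] [LinearOrder R] [IsStrictOrderedRing R] [StarRing R] [TrivialStar R]

theorem PosDef.dotProduct_two_smul_add_mul_inv_mul_mulVec_pos [DecidableEq n]
    {Γ L : Matrix n n R} (hΓ : Γ.PosDef) (hL : L.PosSemidef) {x : n → R} (hx : L *ᵥ x ≠ 0) :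
    0 < x ⬝ᵥ ((2 • L + L * Γ⁻¹ * L) *ᵥ x) := by
  have hLx : 0 ≤ x ⬝ᵥ (L *ᵥ x) := by simpa using hL.dotProduct_mulVec_nonneg x
  have hΓLx : 0 < (L *ᵥ x) ⬝ᵥ (Γ⁻¹ *ᵥ (L *ᵥ x)) := by
    simpa using hΓ.inv.dotProduct_mulVec_pos hx
  rw [add_mulVec, dotProduct_add, ← mulVec_mulVec, ← mulVec_mulVec,
    (isHermitian_iff_isSymm.1 hL.isHermitian).dotProduct_mulVec_comm x, smul_mulVec,
    dotProduct_smul, two_nsmul]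
  linarith

end Matrix

/-- For `Γ ≻ 0`, `Λ̄ ⪰ 0` symmetric, and `v` a unit eigenvector of
`Λ̄` with eigenvalue `μ > 0`, the quadratic form of
`Γ⁻¹ − (Γ+Λ̄)⁻¹ Γ (Γ+Λ̄)⁻¹` at `v` is strictly positive. -/
theorem strict_variance_reduction {n : ℕ}
    (Γ L : Matrix (Fin n) (Fin n) ℝ) (hΓ : Γ.PosDef) (hL : L.PosSemidef)
    (v : Fin n → ℝ) (μ : ℝ) (hμ : 0 < μ) (hv : L *ᵥ v = μ • v)
    (hnorm : ‖(WithLp.equiv 2 (Fin n → ℝ)).symm v‖ = 1) :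
    0 < v ⬝ᵥ ((Γ⁻¹ - (Γ + L)⁻¹ * Γ * (Γ + L)⁻¹) *ᵥ v) := by
  have hv0 : v ≠ 0 := by
    rintro rfl
    simp at hnorm
  have hΓL : (Γ + L).PosDef := hΓ.add_posSemidef hL
  have hLw : L *ᵥ ((Γ + L)⁻¹ *ᵥ v) ≠ 0 := by
    intro hzero
    have hvw : 0 < v ⬝ᵥ ((Γ + L)⁻¹ *ᵥ v) := by simpa using hΓL.inv.dotProduct_mulVec_pos hv0
    have hvLw := (isHermitian_iff_isSymm.1 hL.isHermitian).dotProduct_mulVec_comm v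
      ((Γ + L)⁻¹ *ᵥ v)
    rw [hzero, hv, dotProduct_zero, smul_dotProduct, smul_eq_mul] at hvLw
    exact (mul_pos hμ hvw).ne hvLw
  rw [inv_sub_inv_add_mul_mul_inv_add Γ L hΓ.det_pos.ne'.isUnit hΓL.det_pos.ne'.isUnit,
    (isHermitian_iff_isSymm.1 hΓL.inv.isHermitian).dotProduct_mul_mul_self_mulVec]
  exact hΓ.dotProduct_two_smul_add_mul_inv_mul_mulVec_pos hL hLw
end
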